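/- arXiv:1207.1802 — 6 statements merged into one kernel-verified Lean document; each statement's English description precedes it below -/
import Mathlib

section
/- Let G be a graph and let v be a vertex of G whose unique neighbor is u. Then the nullity of the adjacency matrix of G equals the nullity of the adjacency matrix of the induced subgraph G - {u, v}. -/
open scoped Classical

/-- Characteristic polynomial of the adjacency matrix of a graph. -/
noncomputable def gCharpoly {V : Type*} [Fintype V] (G : SimpleGraph V) : Polynomial ℝ :=
  letI := Classical.decEq V
  letI := Classical.decRel G.Adj
  (G.adjMatrix ℝ).charpoly

/-- Adjacency eigenvalues listed in non-increasing order (with multiplicity). -/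
noncomputable def eigsDesc {V : Type*} [Fintype V] (G : SimpleGraph V) : List ℝ :=
  ((gCharpoly G).roots.sort (· ≤ ·)).reverse

/-- Number of adjacency eigenvalues in the open interval (-1, 1), with multiplicity. -/
noncomputable def numIn {V : Type*} [Fintype V] (G : SimpleGraph V) : ℕ :=
  ((gCharpoly G).roots.filter (fun x => -1 < x ∧ x < 1)).card

/-- Multiplicity of `lam` as an adjacency eigenvalue. -/
noncomputable def multOf {V : Type*} [Fintype V] (G : SimpleGraph V) (lam : ℝ) : ℕ :=
  (gCharpoly G).roots.count lam

/-- Nullity: dimension of the kernel of the adjacency matrix. -/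
noncomputable def gNullity {V : Type*} [Fintype V] (G : SimpleGraph V) : ℕ :=
  letI := Classical.decRel G.Adj
  Module.finrank ℝ (LinearMap.ker (G.adjMatrix ℝ).mulVecLin)

lemma pendant_key {V : Type*} [Fintype V] (G : SimpleGraph V) [DecidableRel G.Adj]
    (u v : V) (huv : G.Adj u v) (hunique : ∀ w, G.Adj w v → w = u)
    (S : Set V) (hS : S = {w | w ≠ u ∧ w ≠ v})
    [Fintype S] [instS : DecidableRel (G.induce S).Adj] :
    Module.finrank ℝ (LinearMap.ker ((G.adjMatrix ℝ).mulVecLin))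
      = Module.finrank ℝ
          (LinearMap.ker (((G.induce S).adjMatrix ℝ).mulVecLin)) := by
  classical
  have hmemS : ∀ w : V, w ∈ S ↔ w ≠ u ∧ w ≠ v := by
    intro w; rw [hS]; exact Iff.rfl
  have hne : u ≠ v := G.ne_of_adj huv
  have hu_not : u ∉ S := fun h => ((hmemS u).1 h).1 rfl
  have hv_not : v ∉ S := fun h => ((hmemS v).1 h).2 rfl
  have hS1 : ∀ w : S, w.1 ≠ u := fun w => ((hmemS w.1).1 w.2).1
  have hS2 : ∀ w : S, w.1 ≠ v := fun w => ((hmemS w.1).1 w.2).2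
  -- splitting a sum over V
  have hsplit : ∀ f : V → ℝ, ∑ t, f t = f u + (f v + ∑ t : S, f t.1) := by
    intro f
    have huniv : (Finset.univ : Finset V)
        = insert u (insert v (Finset.univ.filter (fun t => t ≠ u ∧ t ≠ v))) := by
      ext t
      by_cases h1 : t = u <;> by_cases h2 : t = v <;> simp [h1, h2, hne]
    rw [huniv, Finset.sum_insert (by simp [hne]), Finset.sum_insert (by simp)]
    congr 2
    exact Finset.sum_subtype _ (by intro t; simp [hmemS t]) f
  -- kernel membership for G
  have memK : ∀ x : V → ℝ, x ∈ LinearMap.ker ((G.adjMatrix ℝ).mulVecLin)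
      ↔ ∀ w, ∑ t, (if G.Adj w t then x t else 0) = 0 := by
    intro x
    rw [LinearMap.mem_ker, funext_iff]
    apply forall_congr'
    intro w
    simp [Matrix.mulVecLin_apply, Matrix.mulVec, dotProduct, ite_mul]
  -- kernel membership for the induced graph
  have memK' : ∀ y : S → ℝ, y ∈ LinearMap.ker (((G.induce S).adjMatrix ℝ).mulVecLin)
      ↔ ∀ w : S, ∑ t : S, (if G.Adj w.1 t.1 then y t else 0) = 0 := by
    intro y
    rw [LinearMap.mem_ker, funext_iff]
    apply forall_congr'
    intro w
    simp [Matrix.mulVecLin_apply, Matrix.mulVec, dotProduct, ite_mul,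
      SimpleGraph.comap_adj]
  -- the row at v
  have sum_row_v : ∀ x : V → ℝ, (∑ t, (if G.Adj v t then x t else 0)) = x u := by
    intro x
    have h : ∀ t, (if G.Adj v t then x t else 0) = if t = u then x t else 0 := by
      intro t
      by_cases h : G.Adj v t
      · rw [if_pos h, if_pos (hunique t h.symm)]
      · rw [if_neg h, if_neg (fun ht => h (by rw [ht]; exact huv.symm))]
    rw [Finset.sum_congr rfl (fun t _ => h t)]
    simp
  have xu : ∀ x ∈ LinearMap.ker ((G.adjMatrix ℝ).mulVecLin), x u = 0 := by
    intro x hx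
    have := (memK x).1 hx v
    rwa [sum_row_v x] at this
  -- the extension linear map
  let ext : (S → ℝ) →ₗ[ℝ] (V → ℝ) :=
    { toFun := fun y w =>
        if h : w ∈ S then y ⟨w, h⟩
        else if w = v then -∑ t : S, (if G.Adj u t.1 then y t else 0) else 0
      map_add' := by
        intro y z
        funext w
        by_cases h : w ∈ S
        · simp [h]
        · by_cases hv : w = v
          · rw [hv]
            simp only [Pi.add_apply]
            rw [dif_neg hv_not, dif_neg hv_not, dif_neg hv_not,
              if_pos trivial, if_pos trivial, if_pos trivial, ← neg_add, ← Finset.sum_add_distrib]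
            congr 1
            apply Finset.sum_congr rfl
            intro t _
            split <;> simp
          · simp [h, hv]
      map_smul' := by
        intro c y
        funext w
        by_cases h : w ∈ S
        · simp [h]
        · by_cases hv : w = v
          · rw [hv]
            simp only [Pi.smul_apply, smul_eq_mul, RingHom.id_apply]
            rw [dif_neg hv_not, dif_neg hv_not, if_pos trivial, if_pos trivial,
              mul_neg, Finset.mul_sum]
            congr 1
            apply Finset.sum_congr rfl
            intro t _
            split <;> simp
          · simp [h, hv] }
  have hext_u : ∀ y : S → ℝ, ext y u = 0 := by
    intro y
    show (if h : u ∈ S then y ⟨u, h⟩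
        else if u = v then -∑ t : S, (if G.Adj u t.1 then y t else 0) else 0) = 0
    rw [dif_neg hu_not, if_neg hne]
  have hext_v : ∀ y : S → ℝ, ext y v = -∑ t : S, (if G.Adj u t.1 then y t else 0) := by
    intro y
    show (if h : v ∈ S then y ⟨v, h⟩
        else if v = v then -∑ t : S, (if G.Adj u t.1 then y t else 0) else 0)
      = -∑ t : S, (if G.Adj u t.1 then y t else 0)
    rw [dif_neg hv_not, if_pos rfl]
  have hext_S : ∀ (y : S → ℝ) (t : S), ext y t.1 = y t := by
    intro y t
    show (if h : t.1 ∈ S then y ⟨t.1, h⟩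
        else if t.1 = v then -∑ s : S, (if G.Adj u s.1 then y s else 0) else 0) = y t
    rw [dif_pos t.2]
  -- the restriction linear map
  let res : (V → ℝ) →ₗ[ℝ] (S → ℝ) := LinearMap.funLeft ℝ ℝ (Subtype.val : S → V)
  have hres_app : ∀ (x : V → ℝ) (t : S), res x t = x t.1 := fun _ _ => rfl
  have hres_mem : ∀ x ∈ LinearMap.ker ((G.adjMatrix ℝ).mulVecLin),
      res x ∈ LinearMap.ker (((G.induce S).adjMatrix ℝ).mulVecLin) := by
    intro x hx
    rw [memK']
    intro w
    have hxu := xu x hx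
    have hrow := (memK x).1 hx w.1
    rw [hsplit (fun t => if G.Adj w.1 t then x t else 0)] at hrow
    have h1 : (if G.Adj w.1 u then x u else 0) = 0 := by split <;> simp [hxu]
    have h2 : (if G.Adj w.1 v then x v else 0) = 0 :=
      if_neg (fun h => hS1 w (hunique _ h))
    rw [h1, h2, zero_add, zero_add] at hrow
    have h3 : (∑ t : S, (if G.Adj w.1 t.1 then res x t else 0))
        = ∑ t : S, (if G.Adj w.1 t.1 then x t.1 else 0) :=
      Finset.sum_congr rfl (fun t _ => by rw [hres_app])
    rw [h3]
    exact hrow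
  have hext_mem : ∀ y ∈ LinearMap.ker (((G.induce S).adjMatrix ℝ).mulVecLin),
      ext y ∈ LinearMap.ker ((G.adjMatrix ℝ).mulVecLin) := by
    intro y hy
    rw [memK]
    intro w
    by_cases hw : w ∈ S
    · rw [hsplit (fun t => if G.Adj w t then ext y t else 0)]
      have h1 : (if G.Adj w u then ext y u else 0) = 0 := by split <;> simp [hext_u]
      have h2 : (if G.Adj w v then ext y v else 0) = 0 :=
        if_neg (fun h => ((hmemS w).1 hw).1 (hunique _ h))
      have h3 : (∑ t : S, (if G.Adj w t.1 then ext y t.1 else 0))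
          = ∑ t : S, (if G.Adj w t.1 then y t else 0) :=
        Finset.sum_congr rfl (fun t _ => by rw [hext_S])
      rw [h1, h2, h3, zero_add, zero_add]
      exact (memK' y).1 hy ⟨w, hw⟩
    · by_cases hwv : w = v
      · rw [hwv, sum_row_v, hext_u]
      · have hwu : w = u := by
          by_contra hwu
          exact hw ((hmemS w).2 ⟨hwu, hwv⟩)
        rw [hwu, hsplit (fun t => if G.Adj u t then ext y t else 0)]
        have h1 : (if G.Adj u u then ext y u else 0) = 0 := if_neg (G.irrefl)
        have h2 : (if G.Adj u v then ext y v else 0)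
            = -∑ t : S, (if G.Adj u t.1 then y t else 0) := by
          rw [if_pos huv, hext_v]
        have h3 : (∑ t : S, (if G.Adj u t.1 then ext y t.1 else 0))
            = ∑ t : S, (if G.Adj u t.1 then y t else 0) :=
          Finset.sum_congr rfl (fun t _ => by rw [hext_S])
        rw [h1, h2, h3, zero_add, neg_add_cancel]
  -- the linear equivalence between the kernels
  let F := res.restrict hres_mem
  let B := ext.restrict hext_mem
  have hFB : F.comp B = LinearMap.id := by
    apply LinearMap.ext
    rintro ⟨y, hy⟩
    apply Subtype.ext
    funext w
    show res (ext y) w = y w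
    rw [hres_app]
    exact hext_S y w
  have hBF : B.comp F = LinearMap.id := by
    apply LinearMap.ext
    rintro ⟨x, hx⟩
    apply Subtype.ext
    funext w
    show ext (res x) w = x w
    by_cases hw : w ∈ S
    · have h := hext_S (res x) ⟨w, hw⟩
      rw [hres_app] at h
      exact h
    · by_cases hwv : w = v
      · rw [hwv, hext_v]
        have hrow := (memK x).1 hx u
        rw [hsplit (fun t => if G.Adj u t then x t else 0)] at hrow
        have h1 : (if G.Adj u u then x u else 0) = 0 := if_neg (G.irrefl)
        have h2 : (if G.Adj u v then x v else 0) = x v := if_pos huv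
        rw [h1, h2, zero_add] at hrow
        have h3 : (∑ t : S, (if G.Adj u t.1 then res x t else 0))
            = ∑ t : S, (if G.Adj u t.1 then x t.1 else 0) :=
          Finset.sum_congr rfl (fun t _ => by rw [hres_app])
        rw [h3]
        linarith [hrow]
      · have hwu : w = u := by
          by_contra hwu
          exact hw ((hmemS w).2 ⟨hwu, hwv⟩)
        rw [hwu, hext_u, xu x hx]
  exact LinearEquiv.finrank_eq (LinearEquiv.ofLinear F B hFB hBF)

theorem stmt0 {V : Type*} [Fintype V] (G : SimpleGraph V) (u v : V)
    (huv : G.Adj u v) (hunique : ∀ w, G.Adj w v → w = u) :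
    gNullity G = gNullity (G.induce {w | w ≠ u ∧ w ≠ v}) := by
  unfold gNullity
  exact pendant_key G u v huv hunique _ rfl
end

section
/- If T is a tree on n vertices whose adjacency matrix has nullity h, then the maximum matching in T has size (n - h)/2. -/
open scoped Classical

/-!
A forest with at least one edge has a leaf `u`; let `v` be its neighbour. Deleting `u` and `v`
lowers the matching number by exactly one, since a matching meets at most one edge at `v` and the
edge `uv` can be added to any matching of the rest. It leaves the nullity unchanged: the kernel
equation at `u` forces a kernel vector to vanish at `v`, and the one at `v` then determines its
value at `u`, so restriction is an isomorphism onto the kernel of the smaller adjacency matrix.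
The identity then follows by induction on the number of vertices, with the edgeless graph as
the base case.
-/

open Matrix

theorem forall_iff_and_forall_compl_pair {V : Type*} {u v : V} {P : V → Prop} :
    (∀ w, P w) ↔ P u ∧ P v ∧ ∀ b : ({u, v}ᶜ : Set V), P b := by
  refine ⟨fun h ↦ ⟨h u, h v, fun b ↦ h b⟩, fun ⟨hu, hv, hs⟩ w ↦ ?_⟩
  by_cases hwu : w = u
  · exact hwu ▸ hu
  by_cases hwv : w = v
  · exact hwv ▸ hv
  exact hs ⟨w, by simp [hwu, hwv]⟩

theorem Fintype.sum_eq_add_add_sum_compl_pair {V M : Type*} [AddCommMonoid M] [Fintype V]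
    {u v : V} (huv : u ≠ v) (f : V → M) :
    ∑ z, f z = f u + f v + ∑ z : ({u, v}ᶜ : Set V), f z := by
  rw [← Finset.sum_pair huv, ← Finset.sum_add_sum_compl {u, v} f]
  congr 1
  exact Finset.sum_subtype _ (fun x ↦ by simp) f

theorem Fintype.card_compl_pair {V : Type*} [Fintype V] {u v : V} (huv : u ≠ v) :
    Fintype.card ({u, v}ᶜ : Set V) = Fintype.card V - 2 := by
  rw [Fintype.card_compl_set, Fintype.card_ofFinset]
  simp [huv]

namespace SimpleGraph

variable {V : Type*}

theorem IsAcyclic.exists_adj_forall_adj_eq [Finite V] {G : SimpleGraph V} (hG : G.IsAcyclic)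
    (hne : G ≠ ⊥) : ∃ u v, G.Adj u v ∧ ∀ w, G.Adj u w → w = v := by
  obtain ⟨a, b, hab⟩ := ne_bot_iff_exists_adj.mp hne
  have : Nonempty V := ⟨a⟩
  obtain ⟨u, v, p, hp, hmax⟩ := Walk.exists_isPath_forall_isPath_length_le_length G
  have hnil : ¬p.Nil := fun h ↦ by
    have := hmax a b (Path.singleton hab) (Path.singleton hab).2
    simp [Walk.length_eq_zero_iff.mpr h] at this
  refine ⟨u, p.snd, p.adj_snd hnil, fun w huw ↦ hG.eq_snd_of_adj_start hp huw ?_⟩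
  by_contra hw
  have := hmax w v (p.cons huw.symm) (hp.cons hw)
  simp at this

def matchingSizes (G : SimpleGraph V) : Set ℕ :=
  {k | ∃ M : G.Subgraph, M.IsMatching ∧ M.edgeSet.ncard = k}

theorem isGreatest_matchingSizes_bot : IsGreatest (matchingSizes (⊥ : SimpleGraph V)) 0 := by
  refine ⟨⟨⊥, fun _ h ↦ h.elim, by simp⟩, ?_⟩
  rintro _ ⟨M, -, rfl⟩
  simp [Set.subset_empty_iff.mp (edgeSet_bot (V := V) ▸ M.edgeSet_subset)]

theorem Subgraph.IsMatching.subsingleton_incident {G : SimpleGraph V} {M : G.Subgraph}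
    (hM : M.IsMatching) (v : V) : {e ∈ M.edgeSet | v ∈ e}.Subsingleton := by
  rintro _ ⟨he, hve⟩ _ ⟨he', hve'⟩
  obtain ⟨w, rfl⟩ := Sym2.mem_iff_exists.mp hve
  obtain ⟨w', rfl⟩ := Sym2.mem_iff_exists.mp hve'
  rw [hM.eq_of_adj_left (M.mem_edgeSet.mp he) (M.mem_edgeSet.mp he')]

theorem Subgraph.IsMatching.exists_isMatching_induce {G : SimpleGraph V} {M : G.Subgraph}
    (hM : M.IsMatching) (s : Set V) : ∃ N : (G.induce s).Subgraph,
      N.IsMatching ∧ {e ∈ M.edgeSet | ∀ x ∈ e, x ∈ s} ⊆ Sym2.map (↑) '' N.edgeSet := by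
  let N : (G.induce s).Subgraph :=
    { verts := {a | ∃ b : s, M.Adj a b}
      Adj := fun a b ↦ M.Adj a b
      adj_sub := fun h ↦ M.adj_sub h
      edge_vert := fun {_ b} h ↦ ⟨b, h⟩
      symm := ⟨fun _ _ h ↦ M.adj_symm h⟩ }
  refine ⟨N, fun a ⟨b, hab⟩ ↦ ⟨b, hab, fun c hac ↦ Subtype.ext (hM.eq_of_adj_left hac hab)⟩, ?_⟩
  rintro ⟨a, b⟩ ⟨hab, hs⟩
  exact ⟨s(⟨a, hs a (Sym2.mem_mk_left a b)⟩, ⟨b, hs b (Sym2.mem_mk_right a b)⟩), hab, rfl⟩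

theorem adjMatrix_mulVec_apply_eq_sum_ite {R : Type*} [NonAssocSemiring R] [Fintype V]
    (G : SimpleGraph V) [DecidableRel G.Adj] (x : V → R) (w : V) :
    (G.adjMatrix R *ᵥ x) w = ∑ z, if G.Adj w z then x z else 0 := by
  simp [mulVec, dotProduct, adjMatrix_apply, ite_mul]

theorem gNullity_bot [Fintype V] : gNullity (⊥ : SimpleGraph V) = Fintype.card V := by
  rw [gNullity, LinearMap.ker_eq_top.mpr, finrank_top, Module.finrank_fintype_fun_eq_card]
  ext x w
  simp

section PendantEdge

variable {R : Type*} [Fintype V] {G : SimpleGraph V} {u v : V} {m : ℕ}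

section Semiring

variable [NonAssocSemiring R]

theorem adjMatrix_mulVec_apply_of_forall_adj_eq (huv : G.Adj u v) (hu : ∀ w, G.Adj u w → w = v)
    (x : V → R) : (G.adjMatrix R *ᵥ x) u = x v := by
  rw [adjMatrix_mulVec_apply_eq_sum_ite, Finset.sum_eq_single v (fun z _ hz ↦ if_neg (hz ∘ hu z))
    (by simp), if_pos huv]

theorem adjMatrix_mulVec_apply_eq_add_sum_compl_pair (huv : G.Adj u v) (x : V → R) :
    (G.adjMatrix R *ᵥ x) v = x u + ∑ b : ({u, v}ᶜ : Set V), if G.Adj v b then x b else 0 := by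
  rw [adjMatrix_mulVec_apply_eq_sum_ite, Fintype.sum_eq_add_add_sum_compl_pair huv.ne,
    if_pos huv.symm, if_neg G.irrefl, add_zero]

theorem adjMatrix_mulVec_apply_compl_pair (hu : ∀ w, G.Adj u w → w = v) (huv : u ≠ v)
    (x : V → R) (b : ({u, v}ᶜ : Set V)) :
    (G.adjMatrix R *ᵥ x) b =
      (if G.Adj b v then x v else 0) + ((G.induce {u, v}ᶜ).adjMatrix R *ᵥ (x ∘ (↑))) b := by
  have hbu : ¬G.Adj b u := fun h ↦ b.2 (Or.inr (hu b h.symm))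
  rw [adjMatrix_mulVec_apply_eq_sum_ite, adjMatrix_mulVec_apply_eq_sum_ite (G.induce _),
    Fintype.sum_eq_add_add_sum_compl_pair huv, if_neg hbu, zero_add]
  rfl

end Semiring

variable [CommRing R]

theorem mem_ker_adjMatrix_iff_of_forall_adj_eq (huv : G.Adj u v) (hu : ∀ w, G.Adj u w → w = v)
    (x : V → R) :
    x ∈ LinearMap.ker (G.adjMatrix R).mulVecLin ↔
      x v = 0 ∧ x u + ∑ b : ({u, v}ᶜ : Set V), (if G.Adj v b then x b else 0) = 0 ∧
        x ∘ (↑) ∈ LinearMap.ker ((G.induce {u, v}ᶜ).adjMatrix R).mulVecLin := by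
  simp only [LinearMap.mem_ker, mulVecLin_apply, funext_iff, Pi.zero_apply,
    forall_iff_and_forall_compl_pair (u := u) (v := v),
    adjMatrix_mulVec_apply_of_forall_adj_eq huv hu,
    adjMatrix_mulVec_apply_eq_add_sum_compl_pair huv, adjMatrix_mulVec_apply_compl_pair hu huv.ne]
  refine and_congr_right fun hv ↦ and_congr_right fun _ ↦ ?_
  simp only [hv, ite_self, zero_add]

theorem finrank_ker_adjMatrix_eq_induce_compl_pair (huv : G.Adj u v)
    (hu : ∀ w, G.Adj u w → w = v) :
    Module.finrank R (LinearMap.ker (G.adjMatrix R).mulVecLin) =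
      Module.finrank R (LinearMap.ker ((G.induce {u, v}ᶜ).adjMatrix R).mulVecLin) := by
  set s : Set V := {u, v}ᶜ
  have hmem := mem_ker_adjMatrix_iff_of_forall_adj_eq (R := R) huv hu
  let φ := (LinearMap.funLeft R R ((↑) : s → V)).restrict
    (p := LinearMap.ker (G.adjMatrix R).mulVecLin)
    (q := LinearMap.ker ((G.induce s).adjMatrix R).mulVecLin) fun x hx ↦ ((hmem x).mp hx).2.2
  refine (LinearEquiv.ofBijective φ ⟨?_, ?_⟩).finrank_eq
  · refine (injective_iff_map_eq_zero _).mpr fun ⟨x, hx⟩ h0 ↦ ?_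
    have hs : ∀ b : s, x b = 0 := fun b ↦ congr_fun (congrArg Subtype.val h0) b
    obtain ⟨hv, hu', -⟩ := (hmem x).mp hx
    simp only [hs, ite_self, Finset.sum_const_zero, add_zero] at hu'
    exact Subtype.ext (funext (forall_iff_and_forall_compl_pair.mpr ⟨hu', hv, hs⟩))
  · rintro ⟨y, hy⟩
    let x : V → R := fun w ↦ if h : w ∈ s then y ⟨w, h⟩
      else if w = u then -∑ b : s, (if G.Adj v b then y b else 0) else 0
    have hxs : x ∘ (↑) = y := funext fun b ↦ dif_pos b.2
    have hx : x ∈ LinearMap.ker (G.adjMatrix R).mulVecLin := by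
      refine (hmem x).mpr ⟨by simp [x, s, huv.ne.symm], ?_, hxs ▸ hy⟩
      have hxu : x u = -∑ b : s, (if G.Adj v b then y b else 0) := by simp [x, s]
      have hxb : ∀ b : s, x b = y b := congr_fun hxs
      simp only [hxu, hxb]
      exact neg_add_cancel _
    exact ⟨⟨x, hx⟩, Subtype.ext hxs⟩

theorem gNullity_eq_induce_compl_pair (huv : G.Adj u v) (hu : ∀ w, G.Adj u w → w = v) :
    gNullity G = gNullity (G.induce {u, v}ᶜ) :=
  finrank_ker_adjMatrix_eq_induce_compl_pair huv hu

theorem add_one_mem_matchingSizes (huv : G.Adj u v)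
    (hm : m ∈ matchingSizes (G.induce {u, v}ᶜ)) : m + 1 ∈ matchingSizes G := by
  obtain ⟨M, hM, rfl⟩ := hm
  let f := (Embedding.induce (G := G) {u, v}ᶜ).toHom
  have hf : Function.Injective f := Subtype.val_injective
  have hdisj : Disjoint (M.map f).verts (G.subgraphOfAdj huv).verts := by
    rw [Set.disjoint_right]
    rintro _ hw ⟨a, -, rfl⟩
    exact a.2 hw
  refine ⟨M.map f ⊔ G.subgraphOfAdj huv, ?_, ?_⟩
  · refine (hM.map f hf).sup (.subgraphOfAdj huv) ?_
    rwa [(hM.map f hf).support_eq_verts, (Subgraph.IsMatching.subgraphOfAdj huv).support_eq_verts]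
  · have hedisj : Disjoint (M.map f).edgeSet {s(u, v)} :=
      Set.disjoint_singleton_right.mpr fun h ↦ Set.disjoint_left.mp hdisj
        ((M.map f).edge_vert (Subgraph.mem_edgeSet.mp h)) (by simp)
    rw [Subgraph.edgeSet_sup, edgeSet_subgraphOfAdj, Set.ncard_union_eq hedisj,
      Subgraph.edgeSet_map, Set.ncard_image_of_injective _ (Sym2.map.injective hf),
      Set.ncard_singleton]

theorem le_add_one_of_mem_matchingSizes (hu : ∀ w, G.Adj u w → w = v)
    (hm : m ∈ upperBounds (matchingSizes (G.induce {u, v}ᶜ))) {k : ℕ}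
    (hk : k ∈ matchingSizes G) : k ≤ m + 1 := by
  obtain ⟨M, hM, rfl⟩ := hk
  obtain ⟨N, hN, hsub⟩ := hM.exists_isMatching_induce {u, v}ᶜ
  have hcover : M.edgeSet ⊆ {e ∈ M.edgeSet | ∀ x ∈ e, x ∈ ({u, v}ᶜ : Set V)} ∪
      {e ∈ M.edgeSet | v ∈ e} := by
    have hmem : ∀ {a b}, M.Adj a b → v ∉ s(a, b) → a ∈ ({u, v}ᶜ : Set V) := by
      rintro a b hab hv (rfl | rfl)
      · exact hv (hu b (M.adj_sub hab) ▸ Sym2.mem_mk_right _ _)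
      · exact hv (Sym2.mem_mk_left _ _)
    rintro ⟨a, b⟩ hab
    by_cases hv : v ∈ s(a, b)
    · exact .inr ⟨hab, hv⟩
    refine .inl ⟨hab, fun x hx ↦ ?_⟩
    rcases Sym2.mem_iff.mp hx with rfl | rfl
    · exact hmem hab hv
    · exact hmem (M.adj_symm hab) (by rwa [Sym2.eq_swap])
  calc M.edgeSet.ncard
      ≤ {e ∈ M.edgeSet | ∀ x ∈ e, x ∈ ({u, v}ᶜ : Set V)}.ncard + {e ∈ M.edgeSet | v ∈ e}.ncard :=
        (Set.ncard_le_ncard hcover).trans (Set.ncard_union_le _ _)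
    _ ≤ N.edgeSet.ncard + 1 := by
        gcongr
        · exact (Set.ncard_le_ncard hsub).trans_eq
            (Set.ncard_image_of_injective _ (Sym2.map.injective Subtype.val_injective))
        · exact Set.ncard_le_one_iff_subsingleton.mpr (hM.subsingleton_incident v)
    _ ≤ m + 1 := by
        gcongr
        exact hm ⟨N, hN, rfl⟩

theorem isGreatest_matchingSizes_of_forall_adj_eq (huv : G.Adj u v)
    (hu : ∀ w, G.Adj u w → w = v) (hm : IsGreatest (matchingSizes (G.induce {u, v}ᶜ)) m) :
    IsGreatest (matchingSizes G) (m + 1) :=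
  ⟨add_one_mem_matchingSizes huv hm.1, fun _ ↦ le_add_one_of_mem_matchingSizes hu hm.2⟩

end PendantEdge

theorem IsAcyclic.exists_isGreatest_matchingSizes_and_two_mul_add_gNullity {V : Type*}
    [Fintype V] {G : SimpleGraph V} (hG : G.IsAcyclic) :
    ∃ m, IsGreatest (matchingSizes G) m ∧ 2 * m + gNullity G = Fintype.card V := by
  induction h : Fintype.card V using Nat.strong_induction_on generalizing V with
  | _ n ih =>
    obtain rfl | hne := eq_or_ne G ⊥
    · exact ⟨0, isGreatest_matchingSizes_bot, by rw [gNullity_bot, h, mul_zero, zero_add]⟩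
    obtain ⟨u, v, huv, hu⟩ := hG.exists_adj_forall_adj_eq hne
    have h2 : 2 ≤ n := h ▸ Fintype.one_lt_card_iff.mpr ⟨u, v, huv.ne⟩
    obtain ⟨m, hm, hnull⟩ :=
      ih _ (by omega) (hG.induce _) (Fintype.card_compl_pair huv.ne)
    refine ⟨m + 1, isGreatest_matchingSizes_of_forall_adj_eq huv hu hm, ?_⟩
    rw [gNullity_eq_induce_compl_pair huv hu]
    omega

end SimpleGraph

theorem stmt1 {V : Type*} [Fintype V] (T : SimpleGraph V) (hT : T.IsTree) :
    ∃ m : ℕ,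
      IsGreatest {k : ℕ | ∃ M : T.Subgraph, M.IsMatching ∧ M.edgeSet.ncard = k} m ∧
      2 * m + gNullity T = Fintype.card V :=
  hT.isAcyclic.exists_isGreatest_matchingSizes_and_two_mul_add_gNullity
end

section
/- A tree T has a perfect matching if and only if 0 is not an eigenvalue of its adjacency matrix. -/
open scoped Classical

/-!
Expanding `det A = ∑ σ, sign σ * ∏ i, A (σ i) i`, the only surviving permutations are those
moving every vertex to a neighbour. In a forest such a permutation is an involution: a longer
cycle of `σ` would be a cycle of the graph. So these permutations are exactly the perfect
matchings, they all have sign `(-1) ^ (n / 2)`, and `det A = ± #(perfect matchings)`.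
-/

open Equiv Finset

theorem Matrix.isRoot_charpoly_zero_iff {n R : Type*} [Fintype n] [DecidableEq n] [CommRing R]
    (M : Matrix n n R) : M.charpoly.IsRoot 0 ↔ M.det = 0 := by
  rw [Polynomial.IsRoot, ← Polynomial.coeff_zero_eq_eval_zero, M.det_eq_sign_charpoly_coeff,
    ((isUnit_neg_one (α := R)).pow _).mul_right_eq_zero]

namespace SimpleGraph

variable {V : Type*} {G : SimpleGraph V}

theorem exists_isPerfectMatching_iff_exists_involutive :
    (∃ M : G.Subgraph, M.IsPerfectMatching) ↔
      ∃ σ : Perm V, Function.Involutive σ ∧ ∀ x, G.Adj (σ x) x := by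
  constructor
  · rintro ⟨M, hM⟩
    rw [Subgraph.isPerfectMatching_iff] at hM
    choose f hf hf_unique using hM
    have hinv : Function.Involutive f := fun v => (hf_unique (f v) v (hf v).symm).symm
    exact ⟨hinv.toPerm, hinv, fun v => (M.adj_sub (hf v)).symm⟩
  · rintro ⟨σ, hinv, hσ⟩
    refine ⟨⟨Set.univ, fun a b => G.Adj a b ∧ σ a = b, fun h => h.1, fun _ => trivial,
      ⟨fun a b ⟨hab, hσa⟩ => ⟨hab.symm, hσa ▸ hinv a⟩⟩⟩, ?_⟩
    rw [Subgraph.isPerfectMatching_iff]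
    exact fun v => ⟨σ v, ⟨(hσ v).symm, rfl⟩, fun w hw => hw.2.symm⟩

theorem IsAcyclic.involutive_of_forall_adj [Finite V] (hG : G.IsAcyclic) {σ : Perm V}
    (hσ : ∀ x, G.Adj (σ x) x) : Function.Involutive σ := by
  intro i
  by_contra hi
  set H := G.deleteEdges {s(σ i, i)}
  have hbridge : ¬ H.Reachable (σ i) i := isAcyclic_iff_forall_adj_isBridge.mp hG (hσ i)
  have hstep : ∀ x, x ≠ i → H.Adj x (σ x) := fun x hx =>
    deleteEdges_adj.mpr ⟨(hσ x).symm, by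
      rw [Set.mem_singleton_iff, Sym2.eq_iff]
      rintro (⟨rfl, hx'⟩ | ⟨hx', -⟩)
      · exact hi hx'
      · exact hx hx'⟩
  -- the orbit of `σ i` returns to `i` without using the bridge `{σ i, i}`
  have hreach : ∀ n, H.Reachable (σ i) ((σ ^ (n + 1)) i) := by
    intro n
    induction n with
    | zero => simp
    | succ n ih =>
      have hne : (σ ^ (n + 1)) i ≠ i := fun h => hbridge (by rwa [h] at ih)
      rw [pow_succ', Perm.mul_apply]
      exact ih.trans (hstep _ hne).reachable
  obtain ⟨n, hn⟩ := Nat.exists_eq_add_one_of_ne_zero (orderOf_pos σ).ne'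
  exact hbridge (by simpa [← hn, pow_orderOf_eq_one] using hreach n)

theorem IsAcyclic.exists_isPerfectMatching_iff [Finite V] (hG : G.IsAcyclic) :
    (∃ M : G.Subgraph, M.IsPerfectMatching) ↔ ∃ σ : Perm V, ∀ x, G.Adj (σ x) x := by
  rw [exists_isPerfectMatching_iff_exists_involutive]
  exact exists_congr fun σ => ⟨And.right, fun hσ => ⟨hG.involutive_of_forall_adj hσ, hσ⟩⟩

variable [Fintype V] [DecidableEq V] [DecidableRel G.Adj] {R : Type*} [CommRing R]

theorem det_adjMatrix_eq_sum_sign :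
    (G.adjMatrix R).det = ∑ σ : Perm V with ∀ x, G.Adj (σ x) x, (Perm.sign σ : R) := by
  rw [Matrix.det_apply', sum_filter]
  refine sum_congr rfl fun σ _ => ?_
  simp only [adjMatrix_apply, Fintype.prod_boole, mul_ite, mul_one, mul_zero]

theorem IsAcyclic.det_adjMatrix (hG : G.IsAcyclic) :
    (G.adjMatrix R).det =
      (-1) ^ (Fintype.card V / 2) * #{σ : Perm V | ∀ x, G.Adj (σ x) x} := by
  rw [det_adjMatrix_eq_sum_sign, ← nsmul_eq_mul', ← sum_const]
  refine sum_congr rfl fun σ hσ => ?_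
  have hσ : ∀ x, G.Adj (σ x) x := (mem_filter.mp hσ).2
  have hsq : σ ^ 2 = 1 := Perm.ext fun x => by simp [sq, hG.involutive_of_forall_adj hσ x]
  have hfix : Fintype.card (Function.fixedPoints σ) = 0 :=
    Fintype.card_eq_zero_iff.mpr ⟨fun x => (hσ x).ne x.2⟩
  rw [Perm.sign_of_pow_two_eq_one hsq, hfix, Nat.sub_zero]
  simp

theorem IsAcyclic.det_adjMatrix_ne_zero_iff [CharZero R] (hG : G.IsAcyclic) :
    (G.adjMatrix R).det ≠ 0 ↔ ∃ σ : Perm V, ∀ x, G.Adj (σ x) x := by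
  rw [hG.det_adjMatrix, ((isUnit_neg_one (α := R)).pow _).mul_right_eq_zero.ne, Nat.cast_ne_zero,
    ← pos_iff_ne_zero, card_pos, filter_nonempty_iff]
  simp only [mem_univ, true_and]

end SimpleGraph

theorem stmt2 {V : Type*} [Fintype V] (T : SimpleGraph V) (hT : T.IsTree) :
    (∃ M : T.Subgraph, M.IsPerfectMatching) ↔ ¬ (gCharpoly T).IsRoot 0 := by
  rw [gCharpoly, Matrix.isRoot_charpoly_zero_iff, ← ne_eq,
    hT.isAcyclic.exists_isPerfectMatching_iff, hT.isAcyclic.det_adjMatrix_ne_zero_iff]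
end

section
/- The paths P_1 (one vertex) and P_2 (one edge) are the only reduced trees having at most one adjacency eigenvalue in the open interval (-1, 1), counted with multiplicity. -/
open scoped Classical

/-- There is a pendant `P₂` at `v`: the graph minus `v` has a connected component
isomorphic to `P₂`, consisting of adjacent vertices `a, b` all of whose other
neighbors are `v`. -/
def HasPendantP2At {V : Type*} (G : SimpleGraph V) (v : V) : Prop :=
  ∃ a b : V, a ≠ v ∧ b ≠ v ∧ G.Adj a b ∧
    (∀ w, G.Adj a w → w = b ∨ w = v) ∧ (∀ w, G.Adj b w → w = a ∨ w = v)

/-- A graph is reduced if it has no pendant `P₂` at any vertex. -/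
def Reduced {V : Type*} (G : SimpleGraph V) : Prop :=
  ∀ v : V, ¬ HasPendantP2At G v


/-!
Call `x` and `y` twins if they have the same neighbourhood; distinct twins give the kernel vector
`e_x - e_y` of the adjacency matrix. Root a reduced tree with at least three vertices anywhere.
A farthest vertex `u` is a leaf, and since `u` and its parent do not form a pendant `P₂`, the
parent has a second child, which is again a farthest leaf and hence a twin of `u` (if all vertices
are within distance one of the root, any two non-root vertices are twin leaves). Rooting at one of
these twins yields a second twin pair avoiding it, so the nullity is at least `2` and `0` is an
eigenvalue of multiplicity at least `2`. Conversely, `P₁` has only one eigenvalue, and the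
adjacency matrix of `P₂` squares to the identity, so its eigenvalues are `±1`.
-/

open SimpleGraph Polynomial Matrix

theorem linearIndependent_pair_single_sub_single {ι K : Type*} [DecidableEq ι] [Ring K]
    {x y z w : ι} (hxy : x ≠ y) (hzw : z ≠ w) (hxz : x ≠ z) (hxw : x ≠ w) :
    LinearIndependent K
      ![(Pi.single x 1 - Pi.single y 1 : ι → K), Pi.single z 1 - Pi.single w 1] := by
  rw [LinearIndependent.pair_iff]
  intro s t hst
  have hs : s = 0 := by
    simpa [hxy, hxz, hxw] using congrFun hst x
  subst hs
  simpa [hzw] using congrFun hst z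

namespace Matrix

variable {n K : Type*} [Fintype n] [DecidableEq n]

theorem finrank_ker_mulVecLin_le_count_roots_charpoly [Field K] (A : Matrix n n K) :
    Module.finrank K (LinearMap.ker A.mulVecLin) ≤ A.charpoly.roots.count 0 := by
  rw [count_roots, ← charpoly_toLin', ← Module.End.eigenspace_zero]
  exact LinearMap.finrank_eigenspace_le _ _

theorem sq_eq_one_of_isRoot_charpoly [CommRing K] [IsDomain K] {A : Matrix n n K}
    (hA : A * A = 1) {μ : K} (hμ : A.charpoly.IsRoot μ) : μ ^ 2 = 1 := by
  rw [← charpoly_toLin', ← Module.End.hasEigenvalue_iff_isRoot_charpoly] at hμ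
  obtain ⟨v, hv⟩ := hμ.exists_hasEigenvector
  have hsq : v = μ ^ 2 • v := by
    simpa [sq, ← toLin'_mul, hA] using hv.pow_apply 2
  have : (μ ^ 2 - 1) • v = 0 := by rw [sub_smul, one_smul, ← hsq, sub_self]
  exact sub_eq_zero.mp ((smul_eq_zero.mp this).resolve_right hv.2)

end Matrix

namespace SimpleGraph

variable {V : Type*} {G : SimpleGraph V}

section AdjMatrix

variable [Fintype V] [DecidableEq V] [DecidableRel G.Adj] {K : Type*}

theorem adjMatrix_mulVec_single_sub_single [Ring K] {x y : V}
    (hxy : G.neighborSet x = G.neighborSet y) :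
    G.adjMatrix K *ᵥ (Pi.single x 1 - Pi.single y 1) = 0 := by
  ext v
  have hv : G.Adj v x ↔ G.Adj v y := by
    rw [adj_comm, ← mem_neighborSet, hxy, mem_neighborSet, adj_comm]
  simp [adjMatrix_mulVec_apply, Pi.single_apply, hv]

theorem two_le_finrank_ker_adjMatrix [Field K] {x y z w : V} (hxy : x ≠ y) (hzw : z ≠ w)
    (hxz : x ≠ z) (hxw : x ≠ w) (hxy' : G.neighborSet x = G.neighborSet y)
    (hzw' : G.neighborSet z = G.neighborSet w) :
    2 ≤ Module.finrank K (LinearMap.ker (G.adjMatrix K).mulVecLin) := by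
  have hspan : Submodule.span K (Set.range ![(Pi.single x 1 - Pi.single y 1 : V → K),
      Pi.single z 1 - Pi.single w 1]) ≤ LinearMap.ker (G.adjMatrix K).mulVecLin := by
    rw [Submodule.span_le, Set.range_subset_iff]
    intro i
    fin_cases i
    · exact adjMatrix_mulVec_single_sub_single hxy'
    · exact adjMatrix_mulVec_single_sub_single hzw'
  have := Submodule.finrank_mono hspan
  rwa [finrank_span_eq_card (linearIndependent_pair_single_sub_single hxy hzw hxz hxw),
    Fintype.card_fin] at this

theorem IsRegularOfDegree.adjMatrix_mul_self [NonAssocSemiring K] (hG : G.IsRegularOfDegree 1) :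
    G.adjMatrix K * G.adjMatrix K = 1 := by
  have hnbr : ∀ {u v}, G.Adj u v → G.neighborFinset u = {v} := fun {u v} huv => by
    obtain ⟨w, hw⟩ := Finset.card_eq_one.mp (hG u)
    have : v ∈ G.neighborFinset u := (mem_neighborFinset _ _ _).mpr huv
    rw [hw, Finset.mem_singleton] at this
    rw [hw, this]
  ext u v
  obtain ⟨w, huw⟩ := Finset.card_eq_one.mp (hG u)
  have hadj : G.Adj u w := (mem_neighborFinset _ _ _).mp (huw ▸ Finset.mem_singleton_self w)
  rw [adjMatrix_mul_apply, huw, Finset.sum_singleton, adjMatrix_apply, Matrix.one_apply]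
  have : G.Adj w v ↔ u = v := by
    rw [← mem_neighborFinset, hnbr hadj.symm, Finset.mem_singleton, eq_comm]
  simp [this]

end AdjMatrix

theorem Preconnected.isRegularOfDegree_one [Fintype V] (hG : G.Preconnected)
    (hcard : Fintype.card V = 2) : G.IsRegularOfDegree 1 := fun v => by
  have : Nontrivial V := Fintype.one_lt_card_iff_nontrivial.mp (by omega)
  have := hG.degree_pos_of_nontrivial v
  have := G.degree_lt_card_verts v
  omega

theorem Connected.exists_adj_dist_add_one (hG : G.Connected) {r v : V} (hv : v ≠ r) :
    ∃ b, G.Adj v b ∧ G.dist r b + 1 = G.dist r v := by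
  obtain ⟨p, hp⟩ := hG.exists_walk_length_eq_dist v r
  cases p with
  | nil => exact absurd rfl hv
  | @cons _ b _ hvb q =>
    have hq : G.dist r b ≤ q.length := dist_comm (u := r) ▸ dist_le q
    have htri : G.dist r v ≤ G.dist r b + G.dist b v := hG.dist_triangle
    rw [dist_eq_one_iff_adj.mpr hvb.symm] at htri
    rw [Walk.length_cons, dist_comm] at hp
    exact ⟨b, hvb, by omega⟩

theorem IsTree.eq_of_adj_of_dist_add_one (hG : G.IsTree) {r v b₁ b₂ : V} (h₁ : G.Adj v b₁)
    (h₂ : G.Adj v b₂) (hd₁ : G.dist r b₁ + 1 = G.dist r v) (hd₂ : G.dist r b₂ + 1 = G.dist r v) :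
    b₁ = b₂ := by
  obtain ⟨p, hp, -⟩ := hG.connected.exists_path_of_dist r v
  have hmem : ∀ {b}, G.Adj v b → G.dist r b + 1 = G.dist r v → b = p.penultimate := by
    intro b hb hbd
    obtain ⟨q, hq, hqd⟩ := hG.connected.exists_path_of_dist r b
    have hvq : v ∉ q.support := fun hv => by
      have := (dist_le _).trans (q.length_takeUntil_le_length hv)
      omega
    exact hG.isAcyclic.eq_penultimate_of_adj_end hp hb
      (hG.isAcyclic.mem_support_of_ne_mem_support_of_adj_of_isPath hp hq hb hvq)
  rw [hmem h₁ hd₁, hmem h₂ hd₂]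

theorem IsTree.dist_add_one_of_adj_of_forall_dist_le (hG : G.IsTree) {r u w : V}
    (hmax : ∀ v, G.dist r v ≤ G.dist r u) (huw : G.Adj u w) : G.dist r w + 1 = G.dist r u := by
  have := hmax w
  rcases hG.dist_eq_dist_add_one_of_adj r huw with h | h <;> omega

theorem IsTree.neighborSet_eq_of_forall_dist_le (hG : G.IsTree) {r u b : V}
    (hmax : ∀ v, G.dist r v ≤ G.dist r u) (hub : G.Adj u b) : G.neighborSet u = {b} := by
  ext w
  refine ⟨fun huw => ?_, fun hw => hw ▸ hub⟩
  exact hG.eq_of_adj_of_dist_add_one huw hub (hG.dist_add_one_of_adj_of_forall_dist_le hmax huw)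
    (hG.dist_add_one_of_adj_of_forall_dist_le hmax hub)

end SimpleGraph

theorem Reduced.exists_ne_neighborSet_eq {V : Type*} [Fintype V] {G : SimpleGraph V}
    (hred : Reduced G) (hG : G.IsTree) (hcard : 2 < Fintype.card V) (r : V) :
    ∃ x y, x ≠ y ∧ x ≠ r ∧ y ≠ r ∧ G.neighborSet x = G.neighborSet y := by
  obtain ⟨u, -, hu⟩ := Finset.univ.exists_max_image (G.dist r) ⟨r, Finset.mem_univ r⟩
  have hmax : ∀ v, G.dist r v ≤ G.dist r u := fun v => hu v (Finset.mem_univ v)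
  have hpos : ∀ {v}, v ≠ r → 0 < G.dist r v := fun hv => hG.connected.pos_dist_of_ne hv.symm
  by_cases hD : G.dist r u ≤ 1
  · have hleaf : ∀ v, v ≠ r → G.neighborSet v = {r} := fun v hv => by
      have hv1 : G.dist r v = 1 := le_antisymm ((hmax v).trans hD) (hpos hv)
      exact hG.neighborSet_eq_of_forall_dist_le (fun w => hv1 ▸ (hmax w).trans hD)
        (dist_eq_one_iff_adj.mp hv1).symm
    have : 1 < (Finset.univ.erase r).card := by
      rw [Finset.card_erase_of_mem (Finset.mem_univ r), Finset.card_univ]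
      omega
    obtain ⟨x, hx, y, hy, hxy⟩ := Finset.one_lt_card.mp this
    have hxr := Finset.ne_of_mem_erase hx
    have hyr := Finset.ne_of_mem_erase hy
    exact ⟨x, y, hxy, hxr, hyr, by rw [hleaf x hxr, hleaf y hyr]⟩
  have hur : u ≠ r := fun h => by simp [h] at hD
  obtain ⟨b, hub, hbd⟩ := hG.connected.exists_adj_dist_add_one hur
  have hbr : b ≠ r := fun h => by simp [h] at hbd; omega
  obtain ⟨c, hbc, hcd⟩ := hG.connected.exists_adj_dist_add_one hbr
  have hu : G.neighborSet u = {b} := hG.neighborSet_eq_of_forall_dist_le hmax hub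
  -- Reducedness forbids `u b` from being a pendant `P₂` at `c`, so `b` has a second child.
  obtain ⟨y, hby, hyu, hyc⟩ : ∃ y, G.Adj b y ∧ y ≠ u ∧ y ≠ c := by
    by_contra! h
    refine hred c ⟨u, b, fun huc => ?_, fun hbc' => ?_, hub, fun w hw => ?_,
      fun w hw => or_iff_not_imp_left.mpr (h w hw)⟩
    · rw [huc] at hbd; omega
    · rw [hbc'] at hcd; omega
    · rw [← mem_neighborSet, hu] at hw
      exact Or.inl hw
  have hyd : G.dist r y = G.dist r u := by
    rcases hG.dist_eq_dist_add_one_of_adj r hby with h | h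
    · exact absurd (hG.eq_of_adj_of_dist_add_one hby hbc h.symm hcd) hyc
    · omega
  refine ⟨u, y, hyu.symm, hur, fun hyr => ?_, ?_⟩
  · rw [hyr, dist_self] at hyd; omega
  · rw [hu, hG.neighborSet_eq_of_forall_dist_le (hyd ▸ hmax) hby.symm]

section Counting

variable {V : Type*} [Fintype V] (G : SimpleGraph V)

theorem gNullity_le_multOf_zero : gNullity G ≤ multOf G 0 :=
  Matrix.finrank_ker_mulVecLin_le_count_roots_charpoly _

theorem multOf_zero_le_numIn : multOf G 0 ≤ numIn G := by
  unfold multOf numIn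
  rw [← Multiset.count_filter_of_pos (p := fun x : ℝ => -1 < x ∧ x < 1) (by norm_num)]
  exact Multiset.count_le_card _ _

theorem numIn_le_card : numIn G ≤ Fintype.card V :=
  calc numIn G ≤ (gCharpoly G).roots.card := Multiset.card_le_card (Multiset.filter_le _ _)
    _ ≤ (gCharpoly G).natDegree := card_roots' _
    _ = Fintype.card V := Matrix.charpoly_natDegree_eq_dim _

variable {G}

theorem two_le_numIn {x y z w : V} (hxy : x ≠ y) (hzw : z ≠ w) (hxz : x ≠ z) (hxw : x ≠ w)
    (hxy' : G.neighborSet x = G.neighborSet y) (hzw' : G.neighborSet z = G.neighborSet w) :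
    2 ≤ numIn G :=
  calc 2 ≤ gNullity G := SimpleGraph.two_le_finrank_ker_adjMatrix hxy hzw hxz hxw hxy' hzw'
    _ ≤ multOf G 0 := gNullity_le_multOf_zero G
    _ ≤ numIn G := multOf_zero_le_numIn G

theorem SimpleGraph.IsRegularOfDegree.numIn_eq_zero (hG : G.IsRegularOfDegree 1) :
    numIn G = 0 := by
  unfold numIn gCharpoly
  refine Multiset.card_eq_zero.mpr (Multiset.filter_eq_nil.mpr fun μ hμ hμ1 => ?_)
  have hsq := Matrix.sq_eq_one_of_isRoot_charpoly hG.adjMatrix_mul_self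
    (isRoot_of_mem_roots hμ)
  nlinarith [hμ1.1, hμ1.2]

end Counting

theorem stmt6 {V : Type*} [Fintype V] (T : SimpleGraph V) (hT : T.IsTree) (hred : Reduced T) :
    numIn T ≤ 1 ↔ Fintype.card V ≤ 2 := by
  constructor
  · intro h
    by_contra! hcard
    obtain ⟨r⟩ := hT.connected.nonempty
    obtain ⟨x, y, hxy, -, -, hxy'⟩ := hred.exists_ne_neighborSet_eq hT hcard r
    -- Rooting the tree at `x` produces a second twin pair that avoids `x`.
    obtain ⟨z, w, hzw, hzx, hwx, hzw'⟩ := hred.exists_ne_neighborSet_eq hT hcard x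
    have := two_le_numIn hxy hzw hzx.symm hwx.symm hxy' hzw'
    omega
  · intro h
    rcases h.lt_or_eq with h | h
    · exact (numIn_le_card T).trans (by omega)
    · rw [(hT.connected.preconnected.isRegularOfDegree_one h).numIn_eq_zero]
      exact zero_le_one
end

section
/- The path P_2 on two vertices is the only tree with no adjacency eigenvalue in the open interval (-1, 1). -/
open scoped Classical

/-!
If no eigenvalue of the adjacency matrix `A` lies in `(-1, 1)`, then `A² - I` is positive
semidefinite. For a tree this pins the number of vertices to two: on one vertex the diagonal
entry of `A² - I` is `-1`; on three or more, a leaf `v` has a neighbour `u` with a further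
neighbour `w`, so `(A² - I)_{vv} = deg v - 1 = 0` while `(A² - I)_{vw} = 1`, which violates
the `2 × 2` principal minor condition. Conversely the tree on two vertices has `A² = I`, so
its eigenvalues are `±1`.
-/

open Polynomial

namespace Matrix

lemma PosSemidef.apply_mul_apply_le {n : Type*} {M : Matrix n n ℝ} (hM : M.PosSemidef)
    (i j : n) : M i j * M j i ≤ M i i * M j j := by
  have h := (hM.submatrix ![i, j]).det_nonneg
  rw [det_fin_two] at h
  simpa [sub_nonneg] using h

variable {n : Type*} [Fintype n] [DecidableEq n]

lemma IsHermitian.posSemidef_mul_self_sub_one {A : Matrix n n ℝ} (hA : A.IsHermitian)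
    (h : ∀ x ∈ A.charpoly.roots, x ∉ Set.Ioo (-1) 1) : (A * A - 1).PosSemidef := by
  have hcfc : A * A - 1 = cfc (fun x : ℝ => x * x - 1) A := by
    rw [cfc_sub (fun x : ℝ => x * x) (fun _ => 1) A, cfc_mul (fun x : ℝ => x) (fun x => x) A,
      cfc_id' ℝ A, cfc_const_one ℝ A]
  rw [posSemidef_iff_isHermitian_and_spectrum_nonneg, hcfc, cfc_map_spectrum _ A]
  refine ⟨cfc_predicate _ A, ?_⟩
  rintro _ ⟨x, hx, rfl⟩
  have hroot : x ∈ A.charpoly.roots := by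
    rwa [mem_roots (charpoly_monic A).ne_zero, ← mem_spectrum_iff_isRoot_charpoly]
  have hx1 := h x hroot
  simp only [Set.mem_Ioo, not_and_or, not_lt] at hx1
  change 0 ≤ x * x - 1
  rcases hx1 with hx1 | hx1 <;> nlinarith

lemma eq_one_or_eq_neg_one_of_mem_roots_charpoly {K : Type*} [Field K] {A : Matrix n n K}
    (hA : A * A = 1) {x : K} (hx : x ∈ A.charpoly.roots) : x = 1 ∨ x = -1 := by
  have hspec : x ∈ spectrum K A := by
    rw [mem_spectrum_iff_isRoot_charpoly]
    exact isRoot_of_mem_roots hx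
  cases isEmpty_or_nonempty n
  · simp [spectrum.of_subsingleton] at hspec
  have hsq := spectrum.pow_mem_pow A 2 hspec
  rw [sq, hA, spectrum.one_eq, Set.mem_singleton_iff] at hsq
  exact sq_eq_one_iff.mp hsq

end Matrix

namespace SimpleGraph

variable {V : Type*} {G : SimpleGraph V} [Fintype V] [DecidableRel G.Adj]

lemma neighborFinset_eq_singleton_of_degree_eq_one {u v : V} (hv : G.degree v = 1)
    (hvu : G.Adj v u) : G.neighborFinset v = {u} :=
  (Finset.eq_of_subset_of_card_le
    (Finset.singleton_subset_iff.mpr ((G.mem_neighborFinset v u).mpr hvu))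
    (by rw [card_neighborFinset_eq_degree, hv, Finset.card_singleton])).symm

lemma adjMatrix_mul_self_apply_of_degree_eq_one {R : Type*} [NonAssocSemiring R] {u v w : V}
    (hv : G.degree v = 1) (hvu : G.Adj v u) (huw : G.Adj u w) :
    (G.adjMatrix R * G.adjMatrix R) v w = 1 := by
  rw [adjMatrix_mul_apply, neighborFinset_eq_singleton_of_degree_eq_one hv hvu,
    Finset.sum_singleton, adjMatrix_apply, if_pos huw]

lemma IsRegularOfDegree.adjMatrix_mul_self_eq_one [DecidableEq V] {R : Type*}
    [NonAssocSemiring R] (hG : G.IsRegularOfDegree 1) : G.adjMatrix R * G.adjMatrix R = 1 := by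
  ext v w
  obtain ⟨u, hu⟩ := Finset.card_eq_one.mp (hG v)
  have hvu : G.Adj v u := (G.mem_neighborFinset v u).mp (hu ▸ Finset.mem_singleton_self u)
  have huw : G.Adj u w ↔ v = w := by
    rw [← mem_neighborFinset, neighborFinset_eq_singleton_of_degree_eq_one (hG u) hvu.symm,
      Finset.mem_singleton, eq_comm]
  rw [adjMatrix_mul_apply, hu, Finset.sum_singleton, adjMatrix_apply, Matrix.one_apply]
  exact if_congr huw rfl rfl

lemma IsTree.isRegularOfDegree_one_of_card_eq_two (hG : G.IsTree) (h2 : Fintype.card V = 2) :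
    G.IsRegularOfDegree 1 := by
  have : Nontrivial V := Fintype.one_lt_card_iff_nontrivial.mp (by omega)
  obtain ⟨u, v, huv, hu, hv⟩ := hG.exists_ne_and_degree_eq_one
  have huniv : ({u, v} : Finset V) = Finset.univ :=
    Finset.eq_univ_of_card _ (by rw [Finset.card_pair huv, h2])
  intro w
  rcases Finset.mem_insert.mp (huniv ▸ Finset.mem_univ w) with rfl | hw
  · exact hu
  · rwa [Finset.mem_singleton.mp hw]

lemma Connected.exists_adj_ne_of_degree_eq_one (hG : G.Connected) (hV : 2 < Fintype.card V)
    {u v : V} (hv : G.degree v = 1) (hvu : G.Adj v u) : ∃ w, G.Adj u w ∧ w ≠ v := by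
  have : Nontrivial ({v}ᶜ : Set V) := by
    rw [← Fintype.one_lt_card_iff_nontrivial]
    simp only [Fintype.card_ofFinset, Set.mem_compl_iff, Set.mem_singleton_iff,
      Finset.filter_ne', Finset.card_erase_of_mem (Finset.mem_univ v), Finset.card_univ]
    omega
  obtain ⟨w, hw⟩ := (hG.induce_compl_singleton_of_degree_eq_one hv).preconnected
    |>.exists_adj_of_nontrivial ⟨u, hvu.ne.symm⟩
  exact ⟨w, hw, w.2⟩

lemma IsTree.card_eq_two_of_posSemidef [DecidableEq V] (hG : G.IsTree)
    (hM : (G.adjMatrix ℝ * G.adjMatrix ℝ - 1).PosSemidef) : Fintype.card V = 2 := by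
  have hdiag (v : V) : (G.adjMatrix ℝ * G.adjMatrix ℝ - 1) v v = G.degree v - 1 := by
    rw [Matrix.sub_apply, adjMatrix_mul_self_apply_self, Matrix.one_apply_eq]
  obtain ⟨v₀⟩ := hG.connected.nonempty
  have hpos : 0 < Fintype.card V := Fintype.card_pos_iff.mpr ⟨v₀⟩
  obtain h1 | h2 | h3 : Fintype.card V = 1 ∨ Fintype.card V = 2 ∨ 2 < Fintype.card V := by omega
  · have hdeg : G.degree v₀ = 0 := by have := G.degree_lt_card_verts v₀; omega
    have := hM.diag_nonneg (i := v₀)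
    rw [hdiag, hdeg] at this
    norm_num at this
  · exact h2
  · have : Nontrivial V := Fintype.one_lt_card_iff_nontrivial.mp (by omega)
    obtain ⟨v, hv⟩ := hG.exists_vert_degree_one_of_nontrivial
    obtain ⟨u, hvu⟩ := (G.degree_pos_iff_exists_adj v).mp (by omega)
    obtain ⟨w, huw, hwv⟩ := hG.connected.exists_adj_ne_of_degree_eq_one h3 hv hvu
    have hMvw : (G.adjMatrix ℝ * G.adjMatrix ℝ - 1) v w = 1 := by
      simp [adjMatrix_mul_self_apply_of_degree_eq_one hv hvu huw, Ne.symm hwv]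
    have hMwv : (G.adjMatrix ℝ * G.adjMatrix ℝ - 1) w v = 1 := by
      simpa [hMvw] using hM.isHermitian.apply v w
    have := hM.apply_mul_apply_le v w
    rw [hMvw, hMwv, hdiag, hv] at this
    norm_num at this

end SimpleGraph

lemma gCharpoly_eq_charpoly {V : Type*} [Fintype V] [DecidableEq V] (G : SimpleGraph V)
    [DecidableRel G.Adj] : gCharpoly G = (G.adjMatrix ℝ).charpoly := by
  unfold gCharpoly
  congr!

theorem stmt7 {V : Type*} [Fintype V] (T : SimpleGraph V) (hT : T.IsTree) :
    numIn T = 0 ↔ Fintype.card V = 2 := by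
  rw [numIn, Multiset.card_eq_zero, Multiset.filter_eq_nil, gCharpoly_eq_charpoly]
  constructor
  · intro h
    exact hT.card_eq_two_of_posSemidef ((T.isHermitian_adjMatrix ℝ).posSemidef_mul_self_sub_one h)
  · intro h2 x hx
    have hA : T.adjMatrix ℝ * T.adjMatrix ℝ = 1 :=
      (hT.isRegularOfDegree_one_of_card_eq_two h2).adjMatrix_mul_self_eq_one
    rcases Matrix.eq_one_or_eq_neg_one_of_mem_roots_charpoly hA hx with rfl | rfl <;> norm_num
end

section
/- Let G be a bipartite graph with bipartition V(G) = V_1 ∪ V_2 and exactly k positive adjacency eigenvalues. Let G' be obtained from G by joining each vertex of V_1 to r new vertices of degree 1 (pendant vertices). Then λ_i(G')^2 = λ_i(G)^2 + r for i = 1, ..., k, where λ_i denotes the i-th largest eigenvalue. -/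
open scoped Classical
/-- The graph obtained from `G` by joining each vertex of `V₁` to `r` new pendant vertices. -/
def attachPendants {V : Type*} (G : SimpleGraph V) (V₁ : Set V) (r : ℕ) :
    SimpleGraph (V ⊕ (V₁ × Fin r)) :=
  SimpleGraph.fromRel (fun x y =>
    match x, y with
    | Sum.inl a, Sum.inl b => G.Adj a b
    | Sum.inl a, Sum.inr p => a = (p.1 : V)
    | _, _ => False)

/-! With respect to the bipartition, the adjacency matrix of `G` is `[[0, B], [Bᵀ, 0]]`, and that
of `G'` has the same shape with `B' = [B | P]`, where `P` records the pendant edges, so that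
`B' B'ᵀ = B Bᵀ + r I`. A block factorization gives `x^|V₁| χ(x) = x^|V₂| χ_{BBᵀ}(x²)` for such
matrices, so their positive eigenvalues are the square roots of the positive eigenvalues of the
positive semidefinite matrix `BBᵀ`. If `μ₁ ≥ μ₂ ≥ ⋯ ≥ 0` are the eigenvalues of `BBᵀ`, exactly `k`
of them are positive, the positive eigenvalues of `G` are `√μ₁ ≥ ⋯ ≥ √μₖ`, and those of `G'` are
all of `√(μ₁ + r) ≥ √(μ₂ + r) ≥ ⋯`. -/

open Polynomial Matrix

namespace Multiset

variable {α β : Type*} [LinearOrder α] [LinearOrder β]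

theorem sort_eq_of_pairwise {s : Multiset α} {l : List α} (hl : l.Pairwise (· ≤ ·))
    (hs : (l : Multiset α) = s) : s.sort (· ≤ ·) = l := by
  rw [← hs, coe_sort]
  exact List.mergeSort_eq_self _ hl

theorem sort_map_of_monotone {f : α → β} (hf : Monotone f) (s : Multiset α) :
    (s.map f).sort (· ≤ ·) = (s.sort (· ≤ ·)).map f :=
  sort_eq_of_pairwise ((pairwise_sort s _).map f fun _ _ h => hf h)
    (by rw [← map_coe, sort_eq])

theorem sort_add_of_forall_le {s t : Multiset α} (h : ∀ a ∈ s, ∀ b ∈ t, a ≤ b) :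
    (s + t).sort (· ≤ ·) = s.sort (· ≤ ·) ++ t.sort (· ≤ ·) :=
  sort_eq_of_pairwise
    (List.pairwise_append.mpr ⟨pairwise_sort s _, pairwise_sort t _,
      fun a ha b hb => h a ((mem_sort _).mp ha) b ((mem_sort _).mp hb)⟩)
    (by rw [← coe_add, sort_eq, sort_eq])

theorem getD_reverse_sort_filter_lt {s : Multiset α} (c : α) {i : ℕ}
    (hi : i < card (s.filter (c < ·))) (d : α) :
    ((s.sort (· ≤ ·)).reverse).getD i d = (((s.filter (c < ·)).sort (· ≤ ·)).reverse).getD i d := by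
  have hle : ∀ a ∈ s.filter (¬ c < ·), ∀ b ∈ s.filter (c < ·), a ≤ b := fun a ha b hb =>
    ((not_lt.mp (mem_filter.mp ha).2).trans_lt (mem_filter.mp hb).2).le
  conv_lhs => rw [← filter_add_not (c < ·) s, add_comm]
  rw [sort_add_of_forall_le hle, List.reverse_append, List.getD_append _ _ _ _ (by simpa using hi)]

theorem getD_reverse_sort_map_of_monotone {f : α → β} (hf : Monotone f) {s : Multiset α}
    {i : ℕ} (hi : i < card s) (d : α) (d' : β) :
    (((s.map f).sort (· ≤ ·)).reverse).getD i d' = f (((s.sort (· ≤ ·)).reverse).getD i d) := by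
  have hlen : i < ((s.sort (· ≤ ·)).reverse).length := by simpa using hi
  rw [sort_map_of_monotone hf, ← List.map_reverse, List.getD_eq_getElem _ _ (by simpa using hlen),
    List.getD_eq_getElem _ _ hlen, List.getElem_map]

theorem getD_reverse_sort_mem {s : Multiset α} {i : ℕ} (hi : i < card s) (d : α) :
    ((s.sort (· ≤ ·)).reverse).getD i d ∈ s := by
  have hlen : i < ((s.sort (· ≤ ·)).reverse).length := by simpa using hi
  rw [List.getD_eq_getElem _ _ hlen]
  exact (mem_sort _).mp (List.mem_reverse.mp (List.getElem_mem hlen))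

end Multiset

namespace Polynomial

theorem filter_pos_roots_X_pow_mul {p : ℝ[X]} (hp : p ≠ 0) (k : ℕ) :
    (X ^ k * p).roots.filter (0 < ·) = p.roots.filter (0 < ·) := by
  rw [roots_mul (mul_ne_zero (pow_ne_zero _ X_ne_zero) hp), roots_X_pow, Multiset.filter_add,
    Multiset.filter_eq_nil.mpr (by simp), zero_add]

theorem roots_comp_X_sq {p : ℝ[X]} (hp : p.Splits) (hm : p.Monic)
    (hnn : ∀ a ∈ p.roots, 0 ≤ a) :
    (p.comp (X ^ 2)).roots = p.roots.map Real.sqrt + p.roots.map (- Real.sqrt ·) := by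
  have hfactor : ∀ a ∈ p.roots, (X - C a).comp (X ^ 2) = (X - C √a) * (X - C (-√a)) := by
    intro a ha
    have hsq : C √a ^ 2 = C a := by rw [← map_pow, Real.sq_sqrt (hnn a ha)]
    rw [sub_comp, X_comp, C_comp, map_neg]
    linear_combination hsq
  have hroots (f : ℝ → ℝ) : (p.roots.map fun a => X - C (f a)).prod.roots = p.roots.map f := by
    simpa [Multiset.map_map] using roots_multiset_prod_X_sub_C (p.roots.map f)
  have hmonic (f : ℝ → ℝ) : (p.roots.map fun a => X - C (f a)).prod.Monic :=
    monic_multiset_prod_of_monic _ _ fun _ _ => monic_X_sub_C _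
  conv_lhs => rw [hp.eq_prod_roots_of_monic hm, multiset_prod_comp, Multiset.map_map]
  rw [Multiset.map_congr (f := (fun q : ℝ[X] => q.comp (X ^ 2)) ∘ (fun x => X - C x)) rfl hfactor,
    Multiset.prod_map_mul, roots_mul ((hmonic _).mul (hmonic _)).ne_zero, hroots, hroots]

theorem filter_pos_roots_comp_X_sq {p : ℝ[X]} (hp : p.Splits) (hm : p.Monic)
    (hnn : ∀ a ∈ p.roots, 0 ≤ a) :
    (p.comp (X ^ 2)).roots.filter (0 < ·) = (p.roots.filter (0 < ·)).map Real.sqrt := by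
  have hneg : (p.roots.map (- Real.sqrt ·)).filter (0 < ·) = 0 :=
    Multiset.filter_eq_nil.mpr fun a ha => by
      obtain ⟨x, -, rfl⟩ := Multiset.mem_map.mp ha
      simp [Real.sqrt_nonneg]
  rw [roots_comp_X_sq hp hm hnn, Multiset.filter_add, hneg, add_zero, Multiset.filter_map]
  congr 1
  exact Multiset.filter_congr fun a _ => Real.sqrt_pos

end Polynomial

namespace Matrix

section CommRing

variable {R : Type*} [CommRing R] {m n : Type*} [Fintype m] [Fintype n] [DecidableEq m]
  [DecidableEq n]

theorem charpoly_comp_X_sq (M : Matrix n n R) :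
    M.charpoly.comp (X ^ 2) = (scalar n (X ^ 2) - M.map C).det := by
  rw [charpoly, ← coe_compRingHom_apply, RingHom.map_det, charmatrix]
  congr 1
  ext i j
  by_cases h : i = j <;> simp [h]

theorem charpoly_fromBlocks_zero₁₁_zero₂₂ (B : Matrix m n R) (D : Matrix n m R) :
    X ^ Fintype.card m * (fromBlocks 0 B D 0).charpoly
      = X ^ Fintype.card n * (B * D).charpoly.comp (X ^ 2) := by
  -- right-multiplying the characteristic matrix by a block lower-triangular matrix makes it
  -- block upper-triangular
  have hprod : charmatrix (fromBlocks 0 B D 0) * fromBlocks (scalar m X) 0 (D.map C) (scalar n X)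
      = fromBlocks (scalar m (X ^ 2) - (B * D).map C) (-((X : R[X]) • B.map C)) 0
          (scalar n (X ^ 2)) := by
    rw [charmatrix_fromBlocks, charmatrix_zero, charmatrix_zero]
    simp [fromBlocks_multiply, ← smul_one_eq_diagonal, Matrix.map_mul, sq, sub_eq_add_neg,
      smul_smul]
  have hdet := congrArg det hprod
  rw [det_mul, det_fromBlocks_zero₁₂, det_fromBlocks_zero₂₁, ← charpoly.eq_1,
    ← charpoly_comp_X_sq] at hdet
  simp only [scalar_apply, det_diagonal, Finset.prod_const, Finset.card_univ] at hdet
  apply (isRegular_X_pow (R := R) (Fintype.card n)).left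
  linear_combination hdet

theorem roots_charpoly_add_smul_one [IsDomain R] (M : Matrix n n R) (c : R) :
    (M + c • 1).charpoly.roots = M.charpoly.roots.map (· + c) := by
  have h := charpoly_sub_scalar M (-c)
  rw [scalar_apply, ← smul_one_eq_diagonal, sub_eq_add_neg, ← neg_smul, neg_neg] at h
  rw [h, ← one_mul X, ← C_1, roots_comp_C_mul_X_add_C _ _ _ isUnit_one]
  simp

end CommRing

variable {m n : Type*} [Fintype m] [Fintype n]

theorem posSemidef_self_mul_transpose (B : Matrix m n ℝ) : (B * Bᵀ).PosSemidef := by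
  simpa using posSemidef_self_mul_conjTranspose B

theorem roots_charpoly_self_mul_transpose_nonneg [DecidableEq m] (B : Matrix m n ℝ) :
    ∀ a ∈ (B * Bᵀ).charpoly.roots, 0 ≤ a := by
  intro a ha
  rw [(posSemidef_self_mul_transpose B).1.roots_charpoly_eq_eigenvalues] at ha
  obtain ⟨i, -, rfl⟩ := Multiset.mem_map.mp ha
  exact (posSemidef_self_mul_transpose B).eigenvalues_nonneg i

theorem filter_pos_roots_charpoly_fromBlocks_transpose [DecidableEq m] [DecidableEq n]
    (B : Matrix m n ℝ) :
    (fromBlocks 0 B Bᵀ 0).charpoly.roots.filter (0 < ·)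
      = ((B * Bᵀ).charpoly.roots.filter (0 < ·)).map Real.sqrt := by
  have hmonic := charpoly_monic (B * Bᵀ)
  rw [← filter_pos_roots_X_pow_mul (charpoly_monic _).ne_zero (Fintype.card m),
    charpoly_fromBlocks_zero₁₁_zero₂₂,
    filter_pos_roots_X_pow_mul (hmonic.comp (monic_X_pow 2) (by simp)).ne_zero,
    filter_pos_roots_comp_X_sq (posSemidef_self_mul_transpose B).1.splits_charpoly hmonic
      (roots_charpoly_self_mul_transpose_nonneg B)]

end Matrix

theorem gCharpoly_eq_charpoly_fromBlocks {W ι κ : Type*} [Fintype W] [Fintype ι] [Fintype κ]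
    [DecidableEq ι] [DecidableEq κ] (H : SimpleGraph W) (e : ι ⊕ κ ≃ W)
    (hι : ∀ i i', ¬ H.Adj (e (.inl i)) (e (.inl i')))
    (hκ : ∀ j j', ¬ H.Adj (e (.inr j)) (e (.inr j'))) :
    gCharpoly H = (fromBlocks 0 ((H.adjMatrix ℝ).submatrix (e ∘ .inl) (e ∘ .inr))
      ((H.adjMatrix ℝ).submatrix (e ∘ .inl) (e ∘ .inr))ᵀ 0).charpoly := by
  rw [gCharpoly, ← charpoly_reindex e.symm]
  congr 1
  ext (i | j) (i' | j') <;> simp [hι, hκ, H.adj_comm]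

noncomputable def pendantMatrix (n : Type*) (r : ℕ) : Matrix n (n × Fin r) ℝ :=
  of fun a p => if a = p.1 then 1 else 0

theorem pendantMatrix_mul_transpose {n : Type*} [Fintype n] [DecidableEq n] (r : ℕ) :
    pendantMatrix n r * (pendantMatrix n r)ᵀ = (r : ℝ) • 1 := by
  ext a b
  rw [mul_apply, Fintype.sum_prod_type]
  by_cases h : a = b <;> simp [pendantMatrix, one_apply, h]

namespace SimpleGraph

variable {V : Type*} (G : SimpleGraph V) (V₁ : Set V) (r : ℕ)

noncomputable def biadjMatrix : Matrix V₁ (V₁ᶜ : Set V) ℝ :=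
  (G.adjMatrix ℝ).submatrix (↑) (↑)

variable {G V₁ r}

@[simp]
theorem attachPendants_adj_inl_inl {a b : V} :
    (attachPendants G V₁ r).Adj (.inl a) (.inl b) ↔ G.Adj a b := by
  simp only [attachPendants, fromRel_adj, ne_eq, Sum.inl.injEq]
  exact ⟨fun ⟨_, h⟩ => h.elim id (·.symm), fun h => ⟨h.ne, .inl h⟩⟩

@[simp]
theorem attachPendants_adj_inl_inr {a : V} {p : V₁ × Fin r} :
    (attachPendants G V₁ r).Adj (.inl a) (.inr p) ↔ a = p.1 := by
  simp [attachPendants]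

@[simp]
theorem attachPendants_adj_inr_inl {a : V} {p : V₁ × Fin r} :
    (attachPendants G V₁ r).Adj (.inr p) (.inl a) ↔ a = p.1 := by
  simp [attachPendants]

@[simp]
theorem not_attachPendants_adj_inr_inr {p q : V₁ × Fin r} :
    ¬ (attachPendants G V₁ r).Adj (.inr p) (.inr q) := by
  simp [attachPendants]

variable [Fintype V]

theorem gCharpoly_eq_charpoly_biadjMatrix (hbip : ∀ a b, G.Adj a b → (a ∈ V₁ ↔ b ∉ V₁)) :
    gCharpoly G = (fromBlocks 0 (G.biadjMatrix V₁) (G.biadjMatrix V₁)ᵀ 0).charpoly := by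
  refine gCharpoly_eq_charpoly_fromBlocks G (Equiv.Set.sumCompl V₁) ?_ ?_
  · exact fun a a' h => (hbip _ _ h).mp a.2 a'.2
  · exact fun b b' h => b.2 ((hbip _ _ h).mpr b'.2)

theorem gCharpoly_attachPendants_eq_charpoly_biadjMatrix
    (hbip : ∀ a b, G.Adj a b → (a ∈ V₁ ↔ b ∉ V₁)) :
    gCharpoly (attachPendants G V₁ r)
      = (fromBlocks 0 (fromCols (G.biadjMatrix V₁) (pendantMatrix V₁ r))
          (fromCols (G.biadjMatrix V₁) (pendantMatrix V₁ r))ᵀ 0).charpoly := by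
  let e : V₁ ⊕ ((V₁ᶜ : Set V) ⊕ V₁ × Fin r) ≃ V ⊕ (V₁ × Fin r) :=
    (Equiv.sumAssoc _ _ _).symm.trans ((Equiv.Set.sumCompl V₁).sumCongr (Equiv.refl _))
  have hblock : ((attachPendants G V₁ r).adjMatrix ℝ).submatrix (e ∘ .inl) (e ∘ .inr)
      = fromCols (G.biadjMatrix V₁) (pendantMatrix V₁ r) := by
    ext a (b | p) <;> simp [e, biadjMatrix, pendantMatrix, Subtype.ext_iff]
  rw [gCharpoly_eq_charpoly_fromBlocks (attachPendants G V₁ r) e ?_ ?_, hblock]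
  · exact fun a a' h => (hbip _ _ (attachPendants_adj_inl_inl.mp h)).mp a.2 a'.2
  · rintro (b | p) (b' | p') h
    · exact b.2 ((hbip _ _ (attachPendants_adj_inl_inl.mp h)).mpr b'.2)
    · exact b.2 ((attachPendants_adj_inl_inr.mp h : (b : V) = p'.1) ▸ p'.1.2)
    · exact b'.2 ((attachPendants_adj_inr_inl.mp h : (b' : V) = p.1) ▸ p.1.2)
    · exact not_attachPendants_adj_inr_inr h

theorem filter_pos_roots_gCharpoly (hbip : ∀ a b, G.Adj a b → (a ∈ V₁ ↔ b ∉ V₁)) :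
    (gCharpoly G).roots.filter (0 < ·)
      = ((G.biadjMatrix V₁ * (G.biadjMatrix V₁)ᵀ).charpoly.roots.filter (0 < ·)).map Real.sqrt := by
  rw [gCharpoly_eq_charpoly_biadjMatrix hbip, filter_pos_roots_charpoly_fromBlocks_transpose]

theorem filter_pos_roots_gCharpoly_attachPendants
    (hbip : ∀ a b, G.Adj a b → (a ∈ V₁ ↔ b ∉ V₁)) (hr : 0 < r) :
    (gCharpoly (attachPendants G V₁ r)).roots.filter (0 < ·)
      = (G.biadjMatrix V₁ * (G.biadjMatrix V₁)ᵀ).charpoly.roots.map fun a => √(a + r) := by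
  rw [gCharpoly_attachPendants_eq_charpoly_biadjMatrix hbip,
    filter_pos_roots_charpoly_fromBlocks_transpose, transpose_fromCols, fromCols_mul_fromRows,
    pendantMatrix_mul_transpose, roots_charpoly_add_smul_one, Multiset.filter_map,
    Multiset.map_map, Multiset.filter_eq_self.mpr fun a ha => ?_]
  · rfl
  · have ha₀ := roots_charpoly_self_mul_transpose_nonneg _ a ha
    show 0 < a + r
    positivity

end SimpleGraph

theorem stmt10 {V : Type*} [Fintype V] (G : SimpleGraph V) (V₁ : Set V)
    (hbip : ∀ a b, G.Adj a b → (a ∈ V₁ ↔ b ∉ V₁))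
    (r : ℕ) (hr : 0 < r)
    (k : ℕ) (hk : k = ((gCharpoly G).roots.filter (fun x => 0 < x)).card)
    (i : ℕ) (hi : i < k) :
    ((eigsDesc (attachPendants G V₁ r)).getD i 0) ^ 2 = ((eigsDesc G).getD i 0) ^ 2 + r := by
  set s := (G.biadjMatrix V₁ * (G.biadjMatrix V₁)ᵀ).charpoly.roots
  set μ := ((s.sort (· ≤ ·)).reverse).getD i 0
  have hks : k = (s.filter (0 < ·)).card := by
    rw [hk, SimpleGraph.filter_pos_roots_gCharpoly hbip, Multiset.card_map]
  have hik : i < (s.filter (0 < ·)).card := hks ▸ hi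
  have his : i < s.card := hik.trans_le (Multiset.card_le_card (Multiset.filter_le _ _))
  have hG : (eigsDesc G).getD i 0 = √μ := by
    rw [eigsDesc, Multiset.getD_reverse_sort_filter_lt 0 (hk ▸ hi),
      SimpleGraph.filter_pos_roots_gCharpoly hbip,
      Multiset.getD_reverse_sort_map_of_monotone Real.sqrt_monotone hik 0,
      ← Multiset.getD_reverse_sort_filter_lt 0 hik]
  have hG' : (eigsDesc (attachPendants G V₁ r)).getD i 0 = √(μ + r) := by
    have hpos := SimpleGraph.filter_pos_roots_gCharpoly_attachPendants hbip hr
    rw [eigsDesc, Multiset.getD_reverse_sort_filter_lt 0 (by rwa [hpos, Multiset.card_map]), hpos,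
      Multiset.getD_reverse_sort_map_of_monotone
        (fun _ _ h => Real.sqrt_le_sqrt (by linarith)) his 0]
  have hμ : 0 ≤ μ :=
    roots_charpoly_self_mul_transpose_nonneg _ _ (Multiset.getD_reverse_sort_mem his 0)
  rw [hG, hG', Real.sq_sqrt hμ, Real.sq_sqrt (by positivity)]
end
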